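/- arXiv:1803.08964 — 4 statements merged into one kernel-verified Lean document; each statement's English description precedes it below -/
import Mathlib

section
/- For Re(s) > 1, complex z, and y ≥ 2, the Dirichlet series ∑_{n≥1} z^{ω_y(n)} n^{−s} equals ζ(s) · ∏_{p < y} (1 + (z−1) p^{−s}), where the product runs over primes p < y. -/
/-! Writing `ω_P(n)` for the number of primes of the finite set `P` dividing `n`, the binomial
theorem over those primes gives `z ^ ω_P(n) = ∑_{S ⊆ P, ∏ S ∣ n} (z - 1) ^ #S`. The Dirichlet
series of the indicator of the multiples of `m` is `ζ(s) / m ^ s` (it is `δ_m ⍟ 1`), so the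
Dirichlet series of `z ^ ω_P` is `ζ(s) ∑_{S ⊆ P} ∏_{p ∈ S} (z - 1) / p ^ s`, which factors as
`ζ(s) ∏_{p ∈ P} (1 + (z - 1) / p ^ s)`. -/

open Finset

noncomputable def omegaY (y : ℝ) (n : ℕ) : ℕ :=
  (n.primeFactors.filter (fun p : ℕ => (p : ℝ) < y)).card

open LSeries
open scoped LSeries.notation

lemma natCast_prod_cpow {ι : Type*} (S : Finset ι) (f : ι → ℕ) (s : ℂ) :
    ((∏ i ∈ S, f i : ℕ) : ℂ) ^ s = ∏ i ∈ S, (f i : ℂ) ^ s := by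
  classical
  induction S using Finset.induction_on with
  | empty => simp
  | insert a S ha ih =>
    rw [prod_insert ha, prod_insert ha, Nat.cast_mul, Complex.natCast_mul_natCast_cpow, ih]

lemma LSeriesHasSum_ite_eq {m : ℕ} (hm : m ≠ 0) (s : ℂ) :
    LSeriesHasSum (fun n => if n = m then 1 else 0) s (1 / (m : ℂ) ^ s) := by
  unfold LSeriesHasSum
  convert hasSum_ite_eq m (1 / (m : ℂ) ^ s) using 2 with n
  rcases eq_or_ne n m with rfl | hnm
  · simp [term_of_ne_zero hm]
  · simp [term_def, hnm]

lemma convolution_ite_eq_one_apply {m n : ℕ} (hn : n ≠ 0) :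
    ((fun k => if k = m then (1 : ℂ) else 0) ⍟ 1) n = if m ∣ n then 1 else 0 := by
  simp only [convolution_def, Pi.one_apply, mul_one]
  rw [Nat.sum_divisorsAntidiagonal (fun a _ => if a = m then (1 : ℂ) else 0)]
  simp [Nat.mem_divisors, hn]

lemma LSeriesHasSum_ite_dvd {m : ℕ} (hm : m ≠ 0) {s : ℂ} (hs : 1 < s.re) :
    LSeriesHasSum (fun n => if m ∣ n then 1 else 0) s (riemannZeta s / (m : ℂ) ^ s) := by
  rw [← LSeriesHasSum_congr s _ convolution_ite_eq_one_apply, div_eq_mul_inv, mul_comm,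
    ← one_div]
  exact (LSeriesHasSum_ite_eq hm s).convolution (LSeriesHasSum_one hs)

lemma Nat.prod_dvd_iff_subset_primeFactors {S : Finset ℕ} (hS : ∀ p ∈ S, p.Prime) {n : ℕ}
    (hn : n ≠ 0) : ∏ p ∈ S, p ∣ n ↔ S ⊆ n.primeFactors := by
  simpa [Nat.primeFactors_prod hS] using Nat.prod_primeFactors_dvd_iff (n := ∏ p ∈ S, p) hn

lemma pow_card_inter_primeFactors_eq_sum {P : Finset ℕ} (hP : ∀ p ∈ P, p.Prime) (z : ℂ)
    {n : ℕ} (hn : n ≠ 0) :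
    z ^ #(P ∩ n.primeFactors) =
      ∑ S ∈ P.powerset, (z - 1) ^ #S * if ∏ p ∈ S, p ∣ n then 1 else 0 := by
  have hfilter :
      P.powerset.filter (fun S => ∏ p ∈ S, p ∣ n) = (P ∩ n.primeFactors).powerset := by
    ext S
    simp only [mem_filter, mem_powerset, subset_inter_iff]
    exact and_congr_right fun hSP =>
      Nat.prod_dvd_iff_subset_primeFactors (fun p hp => hP p (hSP hp)) hn
  simp only [mul_ite, mul_one, mul_zero]
  rw [← sum_filter, hfilter]
  simpa using prod_one_add (f := fun _ => z - 1) (P ∩ n.primeFactors)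

theorem LSeries_pow_card_inter_primeFactors {P : Finset ℕ} (hP : ∀ p ∈ P, p.Prime) (z : ℂ)
    {s : ℂ} (hs : 1 < s.re) :
    LSeries (fun n => z ^ #(P ∩ n.primeFactors)) s =
      riemannZeta s * ∏ p ∈ P, (1 + (z - 1) / (p : ℂ) ^ s) := by
  have hdvd (S : Finset ℕ) (hS : S ∈ P.powerset) :=
    LSeriesHasSum_ite_dvd (m := ∏ p ∈ S, p)
      (prod_ne_zero_iff.mpr fun p hp => (hP p (mem_powerset.mp hS hp)).ne_zero) hs
  calc LSeries (fun n => z ^ #(P ∩ n.primeFactors)) s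
      = LSeries (∑ S ∈ P.powerset, (z - 1) ^ #S • fun n => if ∏ p ∈ S, p ∣ n then 1 else 0) s :=
        LSeries_congr (fun hn => by simp [pow_card_inter_primeFactors_eq_sum hP z hn]) s
    _ = ∑ S ∈ P.powerset, (z - 1) ^ #S * (riemannZeta s / ((∏ p ∈ S, p : ℕ) : ℂ) ^ s) := by
        rw [LSeries_sum fun S hS => (hdvd S hS).LSeriesSummable.smul _]
        exact sum_congr rfl fun S hS => by rw [LSeries_smul, (hdvd S hS).LSeries_eq]
    _ = riemannZeta s * ∏ p ∈ P, (1 + (z - 1) / (p : ℂ) ^ s) := by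
        simp_rw [prod_one_add, mul_sum, natCast_prod_cpow, prod_div_distrib, prod_const]
        exact sum_congr rfl fun S _ => by ring

theorem stmt_2_general (s z : ℂ) (hs : 1 < s.re) (y : ℝ) :
    ∑' n : ℕ, (if n = 0 then 0 else z ^ omegaY y n / (n : ℂ) ^ s) =
      riemannZeta s *
        ∏ p ∈ (Finset.range ⌈y⌉₊).filter
            (fun p : ℕ => p.Prime ∧ (p : ℝ) < y),
          (1 + (z - 1) / (p : ℂ) ^ s) := by
  set P := (Finset.range ⌈y⌉₊).filter (fun p : ℕ => p.Prime ∧ (p : ℝ) < y)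
  have hprimes : ∀ p ∈ P, p.Prime := fun p hp => (mem_filter.mp hp).2.1
  have homega (n : ℕ) : omegaY y n = #(P ∩ n.primeFactors) := by
    rw [omegaY, inter_comm]
    congr 1
    ext p
    simp +contextual [P, Nat.lt_ceil]
  rw [← LSeries_pow_card_inter_primeFactors hprimes z hs]
  exact tsum_congr fun n => by rw [term_def, homega]

/-- For `Re s > 1`, `z ∈ ℂ` and `y ≥ 2`, the Dirichlet series of `n ↦ z^{ω_y(n)}`
equals `ζ(s) · ∏_{p < y} (1 + (z-1) p^{-s})`, the product over primes `p < y`. -/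
theorem stmt_2 (s z : ℂ) (hs : 1 < s.re) (y : ℝ) (hy : 2 ≤ y) :
    ∑' n : ℕ, (if n = 0 then 0 else z ^ omegaY y n / (n : ℂ) ^ s) =
      riemannZeta s *
        ∏ p ∈ (Finset.range ⌈y⌉₊).filter
            (fun p : ℕ => p.Prime ∧ (p : ℝ) < y),
          (1 + (z - 1) / (p : ℂ) ^ s) :=
  stmt_2_general s z hs y
end

section
/- If R > 0, |z| ≤ R, Re(s) ≥ 1, and y ≥ 3, then |∏_{p<y}(1 + (z−1)/p^s)| ≪_R (log y)^{|z−1|}. -/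
/-
Each factor satisfies `‖1 + (z - 1) / p ^ s‖ ≤ 1 + ‖z - 1‖ / p ≤ exp (‖z - 1‖ / p)`, so the product
is at most `exp (‖z - 1‖ ∑_{p ≤ y} 1 / p)`, and Mertens' bound `∑_{p ≤ y} 1 / p ≤ log log y + O(1)`
turns this into `e^{O(R)} (log y) ^ ‖z - 1‖`. For Mertens' bound, Legendre's formula
`v_p(n!) ≥ ⌊n / p⌋` together with Chebyshev's `θ(n) ≤ n log 4` gives
`∑_{p ≤ n} log p / p ≤ log n + log 4`, and a discrete partial summation against `1 / log n`
passes from the weights `log p / p` to `1 / p`.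
-/

open Finset Real
open scoped Nat

namespace Nat

theorem div_le_factorization_factorial {p : ℕ} (hp : p.Prime) (n : ℕ) :
    n / p ≤ (n !).factorization p := by
  have := Fact.mk hp
  rw [factorization_def _ hp, padicValNat_factorial (by omega : log p n < log p n + 2)]
  simpa using single_le_sum (f := fun i => n / p ^ i) (by simp)
    (by simp : 1 ∈ Ico 1 (log p n + 2))

end Nat

theorem sum_primesLE_div_mul_log_le_log_factorial (n : ℕ) :
    ∑ p ∈ Nat.primesLE n, ((n / p : ℕ) : ℝ) * log p ≤ log (n ! : ℕ) := by
  have hsupp : (n !).factorization.support ⊆ Nat.primesLE n := fun p hp => by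
    have hp' := Nat.prime_of_mem_primeFactors hp
    exact Nat.mem_primesLE.2
      ⟨(hp'.dvd_factorial).1 (Nat.dvd_of_mem_primeFactors hp), hp'⟩
  rw [log_nat_eq_sum_factorization, Finsupp.sum_of_support_subset _ hsupp _ (by simp)]
  gcongr with p hp
  exact Nat.div_le_factorization_factorial (Nat.prime_of_mem_primesLE hp) n

theorem sum_primesLE_log_div_le (n : ℕ) :
    ∑ p ∈ Nat.primesLE n, log p / p ≤ log n + log 4 := by
  rcases n.eq_zero_or_pos with rfl | hn
  · simpa using log_nonneg (by norm_num : (1 : ℝ) ≤ 4)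
  have hn' : (0 : ℝ) < n := mod_cast hn
  have hdiv : ∀ p ∈ Nat.primesLE n, (n : ℝ) / p * log p ≤ (((n / p : ℕ) : ℝ) + 1) * log p :=
    fun p hp => by
      have := log_nonneg (mod_cast (Nat.prime_of_mem_primesLE hp).one_le : (1 : ℝ) ≤ p)
      gcongr
      rw [← Nat.floor_div_eq_div (K := ℝ)]
      exact (Nat.lt_floor_add_one _).le
  have hfact : log (n ! : ℕ) ≤ n * log n := by
    rw [← log_pow]
    exact log_le_log (mod_cast n.factorial_pos) (mod_cast n.factorial_le_pow)
  refine le_of_mul_le_mul_left ?_ hn'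
  calc (n : ℝ) * ∑ p ∈ Nat.primesLE n, log p / p
      = ∑ p ∈ Nat.primesLE n, (n : ℝ) / p * log p := by
        rw [mul_sum]; congr! 1; ring
    _ ≤ ∑ p ∈ Nat.primesLE n, (((n / p : ℕ) : ℝ) + 1) * log p := sum_le_sum hdiv
    _ = ∑ p ∈ Nat.primesLE n, ((n / p : ℕ) : ℝ) * log p + Chebyshev.theta n := by
        rw [Chebyshev.theta_eq_sum_primesLE_log, ← sum_add_distrib]; congr! 1; ring
    _ ≤ log (n ! : ℕ) + log 4 * n :=
        add_le_add (sum_primesLE_div_mul_log_le_log_factorial n)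
          (Chebyshev.theta_le_log4_mul_x hn'.le)
    _ ≤ n * (log n + log 4) := by linarith

theorem sum_primesLE_succ_inv_sub_div_log (N : ℕ) :
    ∑ p ∈ Nat.primesLE (N + 1), (p : ℝ)⁻¹
        - (∑ p ∈ Nat.primesLE (N + 1), log p / p) / log (N + 1 : ℕ)
      = ∑ p ∈ Nat.primesLE N, (p : ℝ)⁻¹
        - (∑ p ∈ Nat.primesLE N, log p / p) / log (N + 1 : ℕ) := by
  rw [Nat.primesLE_succ]
  split_ifs with hprime
  · have hlog : log (N + 1 : ℕ) ≠ 0 := (log_pos (mod_cast hprime.one_lt)).ne'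
    rw [sum_insert (Nat.notMem_primesLE N), sum_insert (Nat.notMem_primesLE N)]
    field_simp
    ring
  · rfl

theorem sum_primesLE_inv_le_of_sum_log_div_le {c : ℝ}
    (hA : ∀ n : ℕ, ∑ p ∈ Nat.primesLE n, log p / p ≤ log n + c) {N : ℕ} (hN : 2 ≤ N) :
    ∑ p ∈ Nat.primesLE N, (p : ℝ)⁻¹ ≤ log (log N) + (1 + c / log 2 - log (log 2)) := by
  have hlog_pos : ∀ n : ℕ, 2 ≤ n → 0 < log n := fun n hn => log_pos (mod_cast hn)
  -- With `S n = ∑ 1 / p` and `A n = ∑ log p / p`, the quantity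
  -- `S n - A n / log n - log log n + c / log n` is nonincreasing, because `A n ≤ log n + c`
  -- and `1 - log n / log (n + 1) ≤ log log (n + 1) - log log n`.
  have key : ∀ n : ℕ, 2 ≤ n →
      ∑ p ∈ Nat.primesLE n, (p : ℝ)⁻¹ - (∑ p ∈ Nat.primesLE n, log p / p) / log n
        ≤ log (log n) - c / log n + (c / log 2 - log (log 2)) := by
    intro n hn
    induction n, hn using Nat.le_induction with
    | base =>
      have h2 : Nat.primesLE 2 = {2} := by decide
      have : log (2 : ℝ) ≠ 0 := (hlog_pos 2 le_rfl).ne'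
      simp only [h2, sum_singleton, Nat.cast_ofNat]
      field_simp
      linarith
    | succ n hn ih =>
      rw [sum_primesLE_succ_inv_sub_div_log]
      have hu := hlog_pos n hn
      have hv := hlog_pos (n + 1) (by omega)
      have huv : log n ≤ log (n + 1 : ℕ) := log_le_log (by positivity) (mod_cast n.le_succ)
      have hA' := mul_le_mul_of_nonneg_right (hA n) (sub_nonneg.2 (inv_anti₀ hu huv))
      have hloglog : 1 - log n / log (n + 1 : ℕ) ≤ log (log (n + 1 : ℕ)) - log (log n) := by
        rw [← log_div hv.ne' hu.ne']
        simpa using one_sub_inv_le_log_of_pos (div_pos hv hu)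
      generalize ∑ p ∈ Nat.primesLE n, (p : ℝ)⁻¹ = s at ih ⊢
      generalize ∑ p ∈ Nat.primesLE n, log p / p = a at ih hA' ⊢
      linear_combination ih + hA' + hloglog + mul_inv_cancel₀ hu.ne'
  have hAN : (∑ p ∈ Nat.primesLE N, log p / p) / log N ≤ 1 + c / log N := by
    rw [div_le_iff₀ (hlog_pos N hN), add_mul, one_mul, div_mul_cancel₀ _ (hlog_pos N hN).ne']
    linarith [hA N]
  linarith [key N hN]

theorem sum_primesLE_inv_le {N : ℕ} (hN : 2 ≤ N) :
    ∑ p ∈ Nat.primesLE N, (p : ℝ)⁻¹ ≤ log (log N) + (3 - log (log 2)) := by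
  have hlog4 : log 4 / log 2 = 2 := by
    rw [show (4 : ℝ) = 2 ^ 2 by norm_num, log_pow, mul_div_assoc,
      div_self (log_pos one_lt_two).ne']
    norm_num
  have := sum_primesLE_inv_le_of_sum_log_div_le sum_primesLE_log_div_le hN
  rwa [hlog4, show (1 : ℝ) + 2 = 3 by norm_num] at this

theorem Finset.norm_prod_one_add_le_exp_sum {ι R : Type*} [NormedCommRing R] [NormOneClass R]
    (t : Finset ι) (f : ι → R) : ‖∏ i ∈ t, (1 + f i)‖ ≤ exp (∑ i ∈ t, ‖f i‖) := by
  have h := norm_le_norm_sub_add (∏ i ∈ t, (1 + f i)) 1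
  rw [norm_one] at h
  linarith [t.norm_prod_one_add_sub_one_le f]

theorem norm_div_natCast_cpow_le (w : ℂ) {s : ℂ} (hs : 1 ≤ s.re) {n : ℕ} (hn : 0 < n) :
    ‖w / (n : ℂ) ^ s‖ ≤ ‖w‖ / n := by
  rw [norm_div, Complex.norm_natCast_cpow_of_pos hn]
  gcongr
  exact self_le_rpow_of_one_le (mod_cast hn) hs

theorem stmt_3_general (R : ℝ) :
    ∃ C : ℝ, 0 < C ∧ ∀ (z s : ℂ) (y : ℝ), ‖z‖ ≤ R → 1 ≤ s.re → 3 ≤ y →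
      ‖∏ p ∈ (Finset.range ⌈y⌉₊).filter (fun p : ℕ => p.Prime ∧ (p : ℝ) < y),
          (1 + (z - 1) / (p : ℂ) ^ s)‖ ≤ C * Real.log y ^ (‖z - 1‖) := by
  set B : ℝ := 3 - log (log 2)
  refine ⟨exp ((R + 1) * B), exp_pos _, fun z s y hz hs hy => ?_⟩
  set r := ‖z - 1‖
  have hr : r ≤ R + 1 := (norm_sub_le z 1).trans (by simpa using hz)
  have hB : 0 ≤ B := by
    have := log_neg (log_pos one_lt_two) (log_two_lt_d9.trans (by norm_num))
    simp only [B]; linarith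
  have hN : 2 ≤ ⌊y⌋₊ := Nat.le_floor (by push_cast; linarith)
  have hlogy : 0 < log y := log_pos (by linarith)
  have hsub : (Finset.range ⌈y⌉₊).filter (fun p : ℕ => p.Prime ∧ (p : ℝ) < y)
      ⊆ Nat.primesLE ⌊y⌋₊ := fun p hp => by
    simp only [mem_filter] at hp
    exact Nat.mem_primesLE.2 ⟨Nat.le_floor hp.2.2.le, hp.2.1⟩
  have hloglog : log (log ⌊y⌋₊) ≤ log (log y) :=
    log_le_log (log_pos (mod_cast hN)) (log_le_log (by positivity) (Nat.floor_le (by linarith)))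
  calc _ ≤ exp (∑ p ∈ Nat.primesLE ⌊y⌋₊, r * (p : ℝ)⁻¹) := by
        refine (norm_prod_one_add_le_exp_sum _ _).trans (exp_le_exp.2 ?_)
        refine sum_le_sum_of_subset_of_nonneg hsub (fun _ _ _ => by positivity) |>.trans' ?_
        refine sum_le_sum fun p hp => ?_
        have hp0 : 0 < p := (mem_filter.1 hp).2.1.pos
        exact (norm_div_natCast_cpow_le _ hs hp0).trans_eq (div_eq_mul_inv _ _)
    _ ≤ exp (r * (log (log y) + B)) := by
        rw [← mul_sum]
        gcongr
        exact (sum_primesLE_inv_le hN).trans (by linarith)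
    _ ≤ exp ((R + 1) * B + log (log y) * r) := by
        gcongr
        linarith [mul_le_mul_of_nonneg_right hr hB]
    _ = exp ((R + 1) * B) * log y ^ r := by rw [exp_add, rpow_def_of_pos hlogy]

/-- If `R > 0`, `|z| ≤ R`, `Re s ≥ 1` and `y ≥ 3`, then
`|∏_{p<y} (1 + (z-1)/p^s)| ≪_R (log y)^{|z-1|}`. -/
theorem stmt_3 (R : ℝ) (hR : 0 < R) :
    ∃ C : ℝ, 0 < C ∧ ∀ (z s : ℂ) (y : ℝ), ‖z‖ ≤ R → 1 ≤ s.re → 3 ≤ y →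
      ‖∏ p ∈ (Finset.range ⌈y⌉₊).filter (fun p : ℕ => p.Prime ∧ (p : ℝ) < y),
          (1 + (z - 1) / (p : ℂ) ^ s)‖ ≤ C * Real.log y ^ (‖z - 1‖) :=
  stmt_3_general R
end

section
/- For x ≥ y^h ≥ y ≥ 2 and z ∈ ℂ, the Buchstab identity S_z(x,y) = S_z(x, y^h) + (1−z) ∑_{y ≤ p < y^h} S_z(x/p, p) holds, where the sum is over primes p with y ≤ p < y^h. -/
/-!
Since `ω_y(n)` only depends on `⌈y⌉`, it suffices to raise the cut-off one integer `b` at a time.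
Passing from `b` to `b + 1` changes nothing unless `b` is prime, and then only the terms with
`b ∣ n`, whose weight gets multiplied by `z`. Those `n` are the `b * m` with `m ≤ x / b`, and
`ω_b(b m) = ω_b(m)`, so the increment is `(z - 1) S_z(x/b, b)`; summing over `b` telescopes.
-/

open Finset

/-- `Sz z x y = ∑_{n ≤ x} z^{ω_y(n)}`. -/
noncomputable def Sz (z : ℂ) (x y : ℝ) : ℂ :=
  ∑ n ∈ Finset.Icc 1 ⌊x⌋₊, z ^ omegaY y n

theorem Finset.sum_Icc_filter_dvd {M : Type*} [AddCommMonoid M] (f : ℕ → M) {b : ℕ}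
    (hb : 0 < b) (N : ℕ) :
    ∑ n ∈ Icc 1 N with b ∣ n, f n = ∑ m ∈ Icc 1 (N / b), f (b * m) := by
  symm
  refine sum_nbij' (b * ·) (· / b) ?_ ?_ ?_ ?_ fun _ _ => rfl
  · intro m hm
    simp only [mem_filter, mem_Icc] at hm ⊢
    rw [Nat.le_div_iff_mul_le hb] at hm
    exact ⟨⟨by nlinarith, by linarith⟩, dvd_mul_right b m⟩
  · intro n hn
    simp only [mem_filter, mem_Icc] at hn ⊢
    obtain ⟨⟨h1, h2⟩, m, rfl⟩ := hn
    rw [Nat.mul_div_cancel_left m hb, Nat.le_div_iff_mul_le hb]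
    exact ⟨Nat.pos_of_mul_pos_left h1, by linarith⟩
  · exact fun m _ => Nat.mul_div_cancel_left m hb
  · exact fun n hn => Nat.mul_div_cancel' (mem_filter.mp hn).2

lemma omegaY_natCast (b n : ℕ) : omegaY b n = #{p ∈ n.primeFactors | p < b} := by
  simp only [omegaY, Nat.cast_lt]

lemma omegaY_natCast_succ (b n : ℕ) :
    omegaY (b + 1 : ℕ) n = omegaY b n + if b ∈ n.primeFactors then 1 else 0 := by
  have hsplit : {p ∈ n.primeFactors | p < b + 1} =
      {p ∈ n.primeFactors | p < b} ∪ {p ∈ n.primeFactors | p = b} := by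
    rw [← filter_or]
    exact filter_congr fun p _ => Nat.lt_succ_iff_lt_or_eq
  rw [omegaY_natCast, omegaY_natCast, hsplit,
    card_union_of_disjoint (disjoint_filter.mpr fun p _ h h' => by omega), filter_eq']
  split_ifs <;> rfl

lemma omegaY_natCeil (y : ℝ) (n : ℕ) : omegaY y n = omegaY ⌈y⌉₊ n := by
  simp only [omegaY, Nat.cast_lt, Nat.lt_ceil]

lemma Sz_natCeil (z : ℂ) (x y : ℝ) : Sz z x y = Sz z x ⌈y⌉₊ := by
  simp only [Sz, ← omegaY_natCeil]

lemma omegaY_prime_mul {b : ℕ} (hb : b.Prime) {m : ℕ} (hm : m ≠ 0) :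
    omegaY b (b * m) = omegaY b m := by
  rw [omegaY_natCast, omegaY_natCast, Nat.primeFactors_mul hb.ne_zero hm, filter_union,
    hb.primeFactors, filter_singleton, if_neg (lt_irrefl b), empty_union]

lemma sum_filter_mem_primeFactors_eq_Sz_div (z : ℂ) (x : ℝ) (b : ℕ) :
    ∑ n ∈ Icc 1 ⌊x⌋₊ with b ∈ n.primeFactors, z ^ omegaY b n =
      if b.Prime then Sz z (x / b) b else 0 := by
  split_ifs with hb
  · have hdvd : ∀ n ∈ Icc 1 ⌊x⌋₊, b ∈ n.primeFactors ↔ b ∣ n := fun n hn => by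
      simp [Nat.mem_primeFactors, hb, (Nat.one_le_iff_ne_zero.mp (mem_Icc.mp hn).1)]
    rw [filter_congr hdvd, sum_Icc_filter_dvd _ hb.pos, Sz, Nat.floor_div_natCast]
    exact sum_congr rfl fun m hm => by
      rw [omegaY_prime_mul hb (Nat.one_le_iff_ne_zero.mp (mem_Icc.mp hm).1)]
  · exact sum_eq_zero fun n hn => absurd (Nat.prime_of_mem_primeFactors (mem_filter.mp hn).2) hb

lemma Sz_natCast_succ_sub (z : ℂ) (x : ℝ) (b : ℕ) :
    Sz z x (b + 1 : ℕ) - Sz z x b = (z - 1) * if b.Prime then Sz z (x / b) b else 0 := by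
  rw [← sum_filter_mem_primeFactors_eq_Sz_div, mul_sum, sum_filter, Sz, Sz, ← sum_sub_distrib]
  refine sum_congr rfl fun n _ => ?_
  rw [omegaY_natCast_succ]
  split_ifs <;> ring

lemma Sz_natCast_sub (z : ℂ) (x : ℝ) {a b : ℕ} (hab : a ≤ b) :
    Sz z x b - Sz z x a = (z - 1) * ∑ p ∈ Ico a b with p.Prime, Sz z (x / p) p := by
  rw [← sum_Ico_sub (fun k : ℕ => Sz z x k) hab, sum_filter, mul_sum]
  exact sum_congr rfl fun p _ => Sz_natCast_succ_sub z x p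

theorem stmt_8_general (x y h : ℝ) (z : ℂ) (hyh : y ≤ y ^ h) :
    Sz z x y = Sz z x (y ^ h) +
      (1 - z) * ∑ p ∈ (Finset.range ⌈y ^ h⌉₊).filter
          (fun p : ℕ => p.Prime ∧ y ≤ (p : ℝ) ∧ (p : ℝ) < y ^ h),
        Sz z (x / p) p := by
  have hprimes : {p ∈ range ⌈y ^ h⌉₊ | Nat.Prime p ∧ y ≤ (p : ℝ) ∧ (p : ℝ) < y ^ h} =
      {p ∈ Ico ⌈y⌉₊ ⌈y ^ h⌉₊ | p.Prime} := by
    ext p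
    simp only [mem_filter, mem_range, mem_Ico, Nat.ceil_le, Nat.lt_ceil]
    tauto
  rw [hprimes, Sz_natCeil z x y, Sz_natCeil z x (y ^ h)]
  linear_combination -Sz_natCast_sub z x (Nat.ceil_le_ceil hyh)

/-- Buchstab identity: for `x ≥ y^h ≥ y ≥ 2`,
`S_z(x,y) = S_z(x, y^h) + (1-z) ∑_{y ≤ p < y^h} S_z(x/p, p)`,
the sum being over primes `p` with `y ≤ p < y^h`. -/
theorem stmt_8 (x y h : ℝ) (z : ℂ) (hy : 2 ≤ y) (hyh : y ≤ y ^ h)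
    (hx : y ^ h ≤ x) :
    Sz z x y = Sz z x (y ^ h) +
      (1 - z) * ∑ p ∈ (Finset.range ⌈y ^ h⌉₊).filter
          (fun p : ℕ => p.Prime ∧ y ≤ (p : ℝ) ∧ (p : ℝ) < y ^ h),
        Sz z (x / p) p :=
  stmt_8_general x y h z hyh
end

section
/- The Euler product ℓ(z) = e^{(z−1)γ} ∏_p (1 + (z−1)/p)(1 − 1/p)^{z−1}, taken over all primes p, converges for every z ∈ ℂ and defines an entire function of z; moreover ℓ(z) ≠ 0 whenever z ≠ 1 and z ≠ 1 − p for every prime p. -/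
open Complex

/-- One factor of the Euler product defining `ℓ(z)`:
`(1 + (z-1)/p) · (1 - 1/p)^{z-1}` (principal branch). -/
noncomputable def ellFactor (z : ℂ) (p : Nat.Primes) : ℂ :=
  (1 + (z - 1) / (p : ℕ)) * Complex.exp ((z - 1) * Complex.log (1 - 1 / (p : ℕ)))

/-- `ℓ(z) = e^{(z-1)γ} ∏_p (1 + (z-1)/p)(1 - 1/p)^{z-1}`. -/
noncomputable def ell (z : ℂ) : ℂ :=
  Complex.exp ((z - 1) * (Real.eulerMascheroniConstant : ℂ)) * ∏' p : Nat.Primes, ellFactor z p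

/-!
For `p ≥ 2‖z - 1‖` the factor `ellFactor z p` is `exp (log (1 + (z-1)/p) + (z-1) log (1 - 1/p))`,
and the first-order terms `±(z-1)/p` of the two logarithms cancel, so
`‖ellFactor z p - 1‖ = O((‖z-1‖² + ‖z-1‖)/p²)` uniformly on balls. The product is therefore
absolutely convergent, locally uniformly in `z`, so it is entire as a locally uniform limit of
holomorphic partial products, and it vanishes only where one of its factors does: at `z = 1 - p`.
-/

lemma Complex.norm_log_one_add_sub_self_le_sq {u : ℂ} (hu : ‖u‖ ≤ 1 / 2) :
    ‖log (1 + u) - u‖ ≤ ‖u‖ ^ 2 := by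
  have hinv : (1 - ‖u‖)⁻¹ ≤ 2 := by
    rw [inv_le_comm₀ (by linarith) two_pos]
    linarith
  calc ‖log (1 + u) - u‖ ≤ ‖u‖ ^ 2 * (1 - ‖u‖)⁻¹ / 2 :=
        norm_log_one_add_sub_self_le (hu.trans_lt one_half_lt_one)
    _ ≤ ‖u‖ ^ 2 * 2 / 2 := by gcongr
    _ = ‖u‖ ^ 2 := by ring

section EulerFactor

variable {w : ℂ} {n : ℕ} {r : ℝ}

lemma norm_div_natCast_le_half (hw : ‖w‖ ≤ r) (hr : 2 * r ≤ n) : ‖w / n‖ ≤ 1 / 2 := by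
  rw [norm_div, norm_natCast]
  exact div_le_of_le_mul₀ n.cast_nonneg one_half_pos.le (by linarith)

lemma norm_log_one_add_div_add_mul_log_le (hn : 2 ≤ n) (hw : ‖w‖ ≤ r) (hr : 2 * r ≤ n) :
    ‖log (1 + w / n) + w * log (1 - 1 / n)‖ ≤ (r ^ 2 + r) / (n : ℝ) ^ 2 := by
  have hu : ‖w / n‖ ≤ 1 / 2 := norm_div_natCast_le_half hw hr
  have hx : ‖-(1 / n : ℂ)‖ ≤ 1 / 2 := by
    simpa using norm_div_natCast_le_half (w := 1) (r := 1) (by simp) (by exact_mod_cast hn)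
  have hsplit : log (1 + w / n) + w * log (1 - 1 / n) =
      (log (1 + w / n) - w / n) + w * (log (1 + -(1 / n)) - -(1 / n)) := by
    rw [← sub_eq_add_neg]
    ring
  calc ‖log (1 + w / n) + w * log (1 - 1 / n)‖
      ≤ ‖w / n‖ ^ 2 + ‖w‖ * ‖-(1 / n : ℂ)‖ ^ 2 := by
        rw [hsplit]
        refine norm_add_le_of_le (norm_log_one_add_sub_self_le_sq hu) ?_
        rw [norm_mul]
        gcongr
        exact norm_log_one_add_sub_self_le_sq hx
    _ ≤ (r / n) ^ 2 + r * (1 / n) ^ 2 := by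
        simp only [norm_neg, norm_div, norm_one, norm_natCast]
        gcongr
    _ = (r ^ 2 + r) / (n : ℝ) ^ 2 := by ring

lemma norm_one_add_div_mul_exp_sub_one_le (hn : 2 ≤ n) (hw : ‖w‖ ≤ r) (hr : 2 * r ≤ n) :
    ‖(1 + w / n) * exp (w * log (1 - 1 / n)) - 1‖ ≤ 2 * (r ^ 2 + r) / (n : ℝ) ^ 2 := by
  have hne : 1 + w / n ≠ 0 :=
    slitPlane_ne_zero <| mem_slitPlane_of_norm_lt_one <|
      (norm_div_natCast_le_half hw hr).trans_lt one_half_lt_one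
  have hlog := norm_log_one_add_div_add_mul_log_le hn hw hr
  have hsmall : (r ^ 2 + r) / (n : ℝ) ^ 2 ≤ 1 := by
    have hn' : (2 : ℝ) ≤ n := by exact_mod_cast hn
    rw [div_le_one (by positivity)]
    nlinarith [(norm_nonneg w).trans hw]
  rw [← exp_log hne, ← exp_add]
  exact (norm_exp_sub_one_le (hlog.trans hsmall)).trans (by rw [mul_div_assoc]; gcongr)

end EulerFactor

lemma Nat.Primes.summable_div_sq (C : ℝ) : Summable fun p : Nat.Primes ↦ C / ((p : ℕ) : ℝ) ^ 2 :=
  ((Real.summable_one_div_nat_pow.mpr one_lt_two).subtype _).mul_left C |>.congr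
    fun _ ↦ mul_one_div _ _

lemma Nat.Primes.eventually_le_cast (r : ℝ) : ∀ᶠ p : Nat.Primes in Filter.cofinite, r ≤ (p : ℕ) :=
  (tendsto_natCast_atTop_atTop.comp <| Nat.cofinite_eq_atTop ▸
    Subtype.val_injective.tendsto_cofinite).eventually_ge_atTop r

lemma eventually_norm_ellFactor_sub_one_le (r : ℝ) :
    ∀ᶠ p : Nat.Primes in Filter.cofinite, ∀ z : ℂ, ‖z - 1‖ ≤ r →
      ‖ellFactor z p - 1‖ ≤ 2 * (r ^ 2 + r) / ((p : ℕ) : ℝ) ^ 2 := by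
  filter_upwards [Nat.Primes.eventually_le_cast (2 * r)] with p hp z hz
  exact norm_one_add_div_mul_exp_sub_one_le p.2.two_le hz hp

lemma summable_norm_ellFactor_sub_one (z : ℂ) : Summable fun p ↦ ‖ellFactor z p - 1‖ :=
  (Nat.Primes.summable_div_sq _).of_norm_bounded_eventually <| by
    filter_upwards [eventually_norm_ellFactor_sub_one_le ‖z - 1‖] with p hp
    simpa using hp z le_rfl

lemma multipliable_ellFactor (z : ℂ) : Multipliable fun p ↦ ellFactor z p := by
  simpa using multipliable_one_add_of_summable (summable_norm_ellFactor_sub_one z)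

lemma differentiable_ellFactor (p : Nat.Primes) : Differentiable ℂ (ellFactor · p) := by
  unfold ellFactor
  fun_prop

lemma differentiable_tprod_ellFactor : Differentiable ℂ fun z ↦ ∏' p, ellFactor z p := by
  intro z₀
  have hball : ∀ z ∈ Metric.ball z₀ 1, ‖z - 1‖ ≤ ‖z₀ - 1‖ + 1 := fun z hz ↦ by
    rw [Metric.mem_ball, dist_eq_norm] at hz
    linarith [norm_sub_le_norm_sub_add_norm_sub z z₀ 1]
  have hprod := (Nat.Primes.summable_div_sq _).hasProdLocallyUniformlyOn_one_add
    (f := fun p z ↦ ellFactor z p - 1) Metric.isOpen_ball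
    (by filter_upwards [eventually_norm_ellFactor_sub_one_le (‖z₀ - 1‖ + 1)] with p hp z hz
        using hp z (hball z hz))
    (fun p ↦ (differentiable_ellFactor p).continuous.continuousOn.sub continuousOn_const)
  simp only [add_sub_cancel] at hprod
  refine (hprod.differentiableOn (.of_forall fun s ↦ ?_) Metric.isOpen_ball).differentiableAt
    (Metric.isOpen_ball.mem_nhds (Metric.mem_ball_self one_pos))
  exact (Differentiable.fun_finsetProd fun p _ ↦ differentiable_ellFactor p).differentiableOn

lemma ellFactor_ne_zero {z : ℂ} {p : Nat.Primes} (hz : z ≠ 1 - (p : ℕ)) : ellFactor z p ≠ 0 := by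
  have hp : ((p : ℕ) : ℂ) ≠ 0 := Nat.cast_ne_zero.mpr p.2.ne_zero
  refine mul_ne_zero (fun h ↦ hz ?_) (exp_ne_zero _)
  field_simp at h
  linear_combination h

lemma tprod_ellFactor_ne_zero {z : ℂ} (hz : ∀ p : Nat.Primes, z ≠ 1 - (p : ℕ)) :
    ∏' p, ellFactor z p ≠ 0 := by
  simpa using tprod_one_add_ne_zero_of_summable
    (fun p ↦ by simpa using ellFactor_ne_zero (hz p)) (summable_norm_ellFactor_sub_one z)

/-- The Euler product for `ℓ(z)` converges for every `z`, defines an entire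
function of `z`, and `ℓ(z) ≠ 0` whenever `z ≠ 1` and `z ≠ 1 - p` for all primes `p`. -/
theorem stmt_13 :
    (∀ z : ℂ, Multipliable fun p : Nat.Primes => ellFactor z p) ∧
      Differentiable ℂ ell ∧
      ∀ z : ℂ, z ≠ 1 → (∀ p : ℕ, p.Prime → z ≠ 1 - (p : ℂ)) → ell z ≠ 0 :=
  ⟨multipliable_ellFactor,
    (differentiable_id.sub_const 1 |>.mul_const _ |>.cexp).mul differentiable_tprod_ellFactor,
    fun _ _ hz ↦ mul_ne_zero (exp_ne_zero _) (tprod_ellFactor_ne_zero fun p ↦ hz p p.2)⟩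
end
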